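/- arXiv:1702.03481 — 2 statements merged into one kernel-verified Lean document; each statement's English description precedes it below -/
import Mathlib

section
/- If μ̄ solves the Lyapunov measure equation γ[P_T¹ μ̄](B) − μ̄(B) = −m(B) for all B ∈ B(X \ U(ε)) with γ > 1 and μ̄ ≥ 0 finite, then for every set B with m(B) > 0, the iterates satisfy [(P_T¹)ⁿ m](B) ≤ γ^{-n} μ̄(B); in particular [(P_T¹)ⁿ m](B) → 0 geometrically. -/
open MeasureTheory ENNReal

/-!
The Lyapunov equation says `μ̄ = γ • P μ̄ + m`. Hence `m ≤ μ̄` and `P μ̄ ≤ γ⁻¹ • μ̄`, and since `P`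
is monotone and positively homogeneous, `Pⁿ m ≤ Pⁿ μ̄ ≤ γ⁻ⁿ • μ̄`.
-/

theorem Function.iterate_le_pow_smul_of_le_smul {M α : Type*} [Monoid M] [LE M] [Preorder α]
    [MulAction M α] [IsOrderedSMul M α] {f : α → α} (hf : Monotone f)
    (hsmul : ∀ (c : M) (x : α), f (c • x) = c • f x) {c : M} {x y : α}
    (hx : f x ≤ c • x) (hy : y ≤ x) (n : ℕ) : f^[n] y ≤ c ^ n • x := by
  induction n with
  | zero => simpa using hy
  | succ n ih =>
    calc f^[n + 1] y = f (f^[n] y) := Function.iterate_succ_apply' f n y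
      _ ≤ f (c ^ n • x) := hf ih
      _ = c ^ n • f x := hsmul _ _
      _ ≤ c ^ n • c • x := IsOrderedSMul.smul_le_smul_left _ _ hx _
      _ = c ^ (n + 1) • x := by rw [pow_succ, mul_smul]

namespace MeasureTheory.Measure

variable {S : Type*} [MeasurableSpace S]

theorem le_inv_smul_of_smul_le {γ : ℝ≥0∞} (hγ : γ ≠ 0) {μ ν : Measure S} [IsFiniteMeasure μ]
    (h : γ • ν ≤ μ) : ν ≤ γ⁻¹ • μ := fun s => by
  have hs : ν s * γ ≤ μ s := by simpa [mul_comm] using h s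
  rw [smul_apply, smul_eq_mul, ← ENNReal.div_eq_inv_mul]
  exact (ENNReal.le_div_iff_mul_le (.inl hγ) (.inr (measure_ne_top μ s))).2 hs

end MeasureTheory.Measure

theorem lyapunov_measure_geometric_decay_general
    {S : Type*} [MeasurableSpace S]
    (P : Measure S → Measure S)
    (hsmul : ∀ (c : ℝ≥0∞) (μ : Measure S), P (c • μ) = c • P μ)
    (hmono : ∀ μ ν : Measure S, μ ≤ ν → P μ ≤ P ν)
    (m : Measure S)
    (μbar : Measure S) [IsFiniteMeasure μbar]
    (γ : ℝ≥0∞) (hγ : 1 < γ)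
    (heq : ∀ B : Set S, MeasurableSet B → γ * (P μbar) B + m B = μbar B) :
    ∀ (B : Set S), MeasurableSet B → 0 < m B →
      ∀ n : ℕ, (P^[n] m) B ≤ γ⁻¹ ^ n * μbar B := by
  have hlyap : γ • P μbar + m = μbar := Measure.ext fun B hB => by simpa using heq B hB
  have hm : m ≤ μbar := (Measure.le_add_left le_rfl).trans_eq hlyap
  have hdecay : P μbar ≤ γ⁻¹ • μbar :=
    Measure.le_inv_smul_of_smul_le (zero_lt_one.trans hγ).ne'
      ((Measure.le_add_right le_rfl).trans_eq hlyap)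
  intro B _ _ n
  exact Function.iterate_le_pow_smul_of_le_smul (fun μ ν => hmono μ ν) hsmul hdecay hm n B

/-- If `μ̄` solves the Lyapunov measure equation `γ [P¹_T μ̄](B) + m(B) = μ̄(B)` with
`γ > 1` and `μ̄ ≥ 0` finite, then for every measurable `B` with `m(B) > 0` the
iterates decay geometrically: `[(P¹_T)ⁿ m](B) ≤ γ⁻ⁿ μ̄(B)`. -/
theorem lyapunov_measure_geometric_decay
    {S : Type*} [MeasurableSpace S]
    (P : Measure S → Measure S)
    (hadd : ∀ μ ν : Measure S, P (μ + ν) = P μ + P ν)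
    (hsmul : ∀ (c : ℝ≥0∞) (μ : Measure S), P (c • μ) = c • P μ)
    (hmono : ∀ μ ν : Measure S, μ ≤ ν → P μ ≤ P ν)
    (m : Measure S) [IsFiniteMeasure m]
    (μbar : Measure S) [IsFiniteMeasure μbar]
    (γ : ℝ≥0∞) (hγ : 1 < γ)
    (heq : ∀ B : Set S, MeasurableSet B → γ * (P μbar) B + m B = μbar B) :
    ∀ (B : Set S), MeasurableSet B → 0 < m B →
      ∀ n : ℕ, (P^[n] m) B ≤ γ⁻¹ ^ n * μbar B :=
  lyapunov_measure_geometric_decay_general P hsmul hmono m μbar γ hγ heq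
end

section
/- Let P ∈ ℝ^{n×n} be nonnegative and suppose there exists μ ≥ 0 with γ Pᵀ μ − μ = −m for some γ > 1 and strictly positive m ∈ ℝⁿ. Then the spectral radius of P is strictly less than 1/γ < 1; in particular Pⁿ → 0. -/
open Matrix Filter ENNReal

/-- If `P` is nonnegative and there exists `μ ≥ 0` with `γ Pᵀ μ − μ = −m` for some
`γ > 1` and strictly positive `m`, then the spectral radius of `P` is strictly less
than `1/γ < 1`; in particular `Pⁿ → 0`. -/
theorem lyapunov_implies_spectral_radius_lt
    {n : ℕ}
    (P : Matrix (Fin n) (Fin n) ℝ)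
    (hP : ∀ i j, 0 ≤ P i j)
    (γ : ℝ) (hγ : 1 < γ)
    (m : Fin n → ℝ) (hm : ∀ j, 0 < m j)
    (μ : Fin n → ℝ) (hμ : ∀ j, 0 ≤ μ j)
    (heq : γ • (Pᵀ *ᵥ μ) - μ = -m) :
    spectralRadius ℝ (Matrix.toEuclideanCLM (𝕜 := ℝ) P) < ENNReal.ofReal (1 / γ) ∧
    Filter.Tendsto (fun k : ℕ => P ^ k) Filter.atTop (nhds 0) := by
  have hγ0 : (0:ℝ) < γ := lt_trans one_pos hγ
  have hinv : (0:ℝ) < 1 / γ := by positivity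
  -- the equation, pointwise
  have heq' : ∀ j, γ * (∑ i, P i j * μ i) = μ j - m j := by
    intro j
    have h := congrFun heq j
    simp only [Pi.sub_apply, Pi.smul_apply, Pi.neg_apply, smul_eq_mul] at h
    have hPt : (Pᵀ *ᵥ μ) j = ∑ i, P i j * μ i := by
      simp [Matrix.mulVec, dotProduct, Matrix.transpose_apply]
    rw [hPt] at h
    linarith
  have hnum : ∀ j, 0 ≤ μ j - m j := by
    intro j
    rw [← heq' j]
    have : 0 ≤ ∑ i, P i j * μ i :=
      Finset.sum_nonneg fun i _ => mul_nonneg (hP i j) (hμ i)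
    positivity
  have hμpos : ∀ j, 0 < μ j := fun j => lt_of_lt_of_le (hm j) (by linarith [hnum j])
  rcases Nat.eq_zero_or_pos n with hn | hn
  · -- trivial case `n = 0`
    subst hn
    haveI : Subsingleton (Matrix (Fin 0) (Fin 0) ℝ) :=
      ⟨fun a b => by ext i j; exact i.elim0⟩
    constructor
    · have hspec : spectrum ℝ (Matrix.toEuclideanCLM (𝕜 := ℝ) P) = ∅ := by
        rw [AlgEquiv.spectrum_eq (Matrix.toEuclideanCLM (𝕜 := ℝ) (n := Fin 0))]
        ext lam
        simp [spectrum.mem_iff, isUnit_of_subsingleton]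
      rw [spectralRadius, hspec]
      simpa using ENNReal.ofReal_pos.mpr hinv
    · have hzero : (fun k : ℕ => P ^ k) = fun _ => (0 : Matrix (Fin 0) (Fin 0) ℝ) := by
        funext k; exact Subsingleton.elim _ _
      rw [hzero]; exact tendsto_const_nhds
  haveI : Nonempty (Fin n) := Fin.pos_iff_nonempty.mp hn
  -- the contraction constant
  set c : ℝ := Finset.univ.sup' Finset.univ_nonempty (fun j => (μ j - m j) / (γ * μ j)) with hc
  have hcb : ∀ j, (μ j - m j) / (γ * μ j) ≤ c := fun j =>
    Finset.le_sup' (fun j => (μ j - m j) / (γ * μ j)) (Finset.mem_univ j)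
  have hc1 : c < 1 / γ := by
    refine (Finset.sup'_lt_iff Finset.univ_nonempty).mpr fun j _ => ?_
    rw [div_lt_div_iff₀ (mul_pos hγ0 (hμpos j)) hγ0]
    nlinarith [hm j, hμpos j]
  have hc0 : 0 ≤ c := by
    obtain ⟨j0⟩ := (inferInstance : Nonempty (Fin n))
    exact le_trans (div_nonneg (hnum j0) (mul_pos hγ0 (hμpos j0)).le) (hcb j0)
  have hc1' : c < 1 := lt_trans hc1 (by rw [div_lt_one hγ0]; exact hγ)
  -- column bound
  have hcol : ∀ j, (∑ i, P i j * μ i) ≤ c * μ j := by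
    intro j
    have h1 : (μ j - m j) ≤ c * (γ * μ j) :=
      (div_le_iff₀ (mul_pos hγ0 (hμpos j))).mp (hcb j)
    nlinarith [heq' j, hγ0]
  -- key contraction estimate for nonnegative vectors
  have key : ∀ w : Fin n → ℝ, (∀ j, 0 ≤ w j) →
      (∑ j, μ j * (∑ k, P j k * w k)) ≤ c * ∑ j, μ j * w j := by
    intro w hw
    calc (∑ j, μ j * ∑ k, P j k * w k)
        = ∑ j, ∑ k, μ j * (P j k * w k) := by
          simp [Finset.mul_sum]
      _ = ∑ k, ∑ j, μ j * (P j k * w k) := Finset.sum_comm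
      _ = ∑ k, (∑ j, P j k * μ j) * w k := by
          refine Finset.sum_congr rfl fun k _ => ?_
          rw [Finset.sum_mul]
          exact Finset.sum_congr rfl fun j _ => by ring
      _ ≤ ∑ k, (c * μ k) * w k := by
          refine Finset.sum_le_sum fun k _ => ?_
          exact mul_le_mul_of_nonneg_right (hcol k) (hw k)
      _ = c * ∑ k, μ k * w k := by
          rw [Finset.mul_sum]
          exact Finset.sum_congr rfl fun k _ => by ring
  constructor
  · -- the spectral radius bound
    have hbound : ∀ lam ∈ spectrum ℝ (Matrix.toEuclideanCLM (𝕜 := ℝ) P), |lam| ≤ c := by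
      intro lam hlam
      rw [AlgEquiv.spectrum_eq (Matrix.toEuclideanCLM (𝕜 := ℝ) (n := Fin n)),
        ← AlgEquiv.spectrum_eq (Matrix.toLinAlgEquiv' (R := ℝ) (n := Fin n)),
        ← Module.End.hasEigenvalue_iff_mem_spectrum] at hlam
      obtain ⟨v, hv⟩ := hlam.exists_hasEigenvector
      have hPv : ∀ j, ∑ k, P j k * v k = lam * v j := by
        intro j
        have h := congrFun hv.apply_eq_smul j
        simpa [Matrix.toLinAlgEquiv'_apply, Matrix.toLin'_apply, Matrix.mulVec,
          dotProduct] using h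
      obtain ⟨i0, hi0⟩ := Function.ne_iff.mp hv.2
      have hS : 0 < ∑ j, μ j * |v j| := by
        refine Finset.sum_pos' (fun j _ => mul_nonneg (hμ j) (abs_nonneg _)) ?_
        exact ⟨i0, Finset.mem_univ i0,
          mul_pos (hμpos i0) (abs_pos.mpr (by simpa using hi0))⟩
      have hchain : |lam| * ∑ j, μ j * |v j| ≤ c * ∑ j, μ j * |v j| := by
        calc |lam| * ∑ j, μ j * |v j|
            = ∑ j, μ j * |lam * v j| := by
              rw [Finset.mul_sum]
              exact Finset.sum_congr rfl fun j _ => by rw [abs_mul]; ring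
          _ = ∑ j, μ j * |∑ k, P j k * v k| := by
              exact Finset.sum_congr rfl fun j _ => by rw [hPv j]
          _ ≤ ∑ j, μ j * (∑ k, P j k * |v k|) := by
              refine Finset.sum_le_sum fun j _ => ?_
              refine mul_le_mul_of_nonneg_left ?_ (hμ j)
              calc |∑ k, P j k * v k| ≤ ∑ k, |P j k * v k| :=
                    Finset.abs_sum_le_sum_abs _ _
                _ = ∑ k, P j k * |v k| := Finset.sum_congr rfl fun k _ => by
                    rw [abs_mul, abs_of_nonneg (hP j k)]
          _ ≤ c * ∑ j, μ j * |v j| := key _ (fun k => abs_nonneg _)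
      exact le_of_mul_le_mul_right (by simpa [mul_comm] using hchain) hS
    refine lt_of_le_of_lt (a := spectralRadius ℝ (Matrix.toEuclideanCLM (𝕜 := ℝ) P))
      (b := ENNReal.ofReal c) ?_ ?_
    · rw [spectralRadius]
      refine iSup₂_le fun lam hlam => ?_
      have h := hbound lam hlam
      rw [show (‖lam‖₊ : ℝ≥0∞) = ENNReal.ofReal ‖lam‖ from (ofReal_norm lam).symm, Real.norm_eq_abs]
      exact ENNReal.ofReal_le_ofReal h
    · exact (ENNReal.ofReal_lt_ofReal_iff hinv).mpr hc1
  · -- convergence of powers to zero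
    have hpow : ∀ k, ∀ i j, 0 ≤ (P ^ k) i j := by
      intro k
      induction k with
      | zero =>
        intro i j
        rw [pow_zero, Matrix.one_apply]
        split <;> norm_num
      | succ k ih =>
        intro i j
        rw [pow_succ, Matrix.mul_apply]
        exact Finset.sum_nonneg fun l _ => mul_nonneg (ih i l) (hP l j)
    have hdecay : ∀ k i, (∑ j, μ j * (P ^ k) j i) ≤ c ^ k * μ i := by
      intro k
      induction k with
      | zero =>
        intro i
        simp only [pow_zero, Matrix.one_apply, one_mul, mul_ite, mul_one, mul_zero]
        rw [Finset.sum_ite_eq' Finset.univ i μ]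
        simp
      | succ k ih =>
        intro i
        have hrw : ∀ j, (P ^ (k + 1)) j i = ∑ l, P j l * (P ^ k) l i := by
          intro j; rw [pow_succ', Matrix.mul_apply]
        calc (∑ j, μ j * (P ^ (k + 1)) j i)
            = ∑ j, μ j * (∑ l, P j l * (P ^ k) l i) := by
              exact Finset.sum_congr rfl fun j _ => by rw [hrw j]
          _ ≤ c * ∑ l, μ l * (P ^ k) l i := key _ (fun l => hpow k l i)
          _ ≤ c * (c ^ k * μ i) := mul_le_mul_of_nonneg_left (ih i) hc0
          _ = c ^ (k + 1) * μ i := by ring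
    have hentry : ∀ k i j, (P ^ k) i j ≤ c ^ k * (μ j / μ i) := by
      intro k i j
      have h1 : μ i * (P ^ k) i j ≤ ∑ l, μ l * (P ^ k) l j :=
        Finset.single_le_sum (f := fun l => μ l * (P ^ k) l j)
          (fun l _ => mul_nonneg (hμ l) (hpow k l j)) (Finset.mem_univ i)
      have h2 := le_trans h1 (hdecay k j)
      rw [← mul_div_assoc, le_div_iff₀ (hμpos i)]
      nlinarith [h2]
    have hgeo : Tendsto (fun k : ℕ => c ^ k) atTop (nhds 0) :=
      tendsto_pow_atTop_nhds_zero_of_lt_one hc0 hc1'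
    refine tendsto_pi_nhds.mpr fun i => tendsto_pi_nhds.mpr fun j => ?_
    refine squeeze_zero (fun k => hpow k i j) (fun k => hentry k i j) ?_
    simpa using hgeo.mul_const (μ j / μ i)
end
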